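/- Let d ≥ 1 and 0 < δ ≤ 1/4. Let y_1, y_2, y_5, y'_1, y'_2, y'_5 ∈ ℝ^d satisfy ‖y_i − y'_i‖ ≤ δ for i ∈ {1,2,5}, min{‖y_1 − y_5‖, ‖y_2 − y_5‖} ≥ √δ, and (3/2)√δ ≤ Arc(y_1 − y_5, y_2 − y_5) ≤ 1/2 − (3/2)√δ. Then |Arc(y_1 − y_5, y_2 − y_5) − Arc(y'_1 − y'_5, y'_2 − y'_5)| ≤ (3/2)√δ. -/

import Mathlib

/-!
By the law of sines `‖u‖ sin ∠(u, u') ≤ ‖u - u'‖`, and `∠(u, u') ≤ π / 2` once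
`‖u - u'‖ ≤ ‖u‖`, so Jordan's inequality gives `∠(u, u') ≤ (π / 2) ‖u - u'‖ / ‖u‖`. Each leg
`y_i - y_5` moves by at most `2δ` and has length at least `√δ`, hence turns by at most `π √δ`;
by the triangle inequality for angles the angle between the legs changes by at most `2π √δ`,
that is, `Arc` changes by at most `√δ`. Since `Arc ≥ 0`, the upper bound on `Arc` forces
`√δ ≤ 1 / 3`, so `2δ < √δ` and the perturbed legs stay nonzero.
-/

/-- `Arc(u,v) := (2π)⁻¹ arccos(⟨u,v⟩/(‖u‖‖v‖))` if `u ≠ 0` and `v ≠ 0`, and `0` otherwise. -/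
noncomputable def Arc {d : ℕ} (u v : EuclideanSpace ℝ (Fin d)) : ℝ :=
  letI := Classical.propDecidable (u ≠ 0 ∧ v ≠ 0)
  if u ≠ 0 ∧ v ≠ 0 then (2 * Real.pi)⁻¹ * Real.arccos ((inner ℝ u v : ℝ) / (‖u‖ * ‖v‖)) else 0

open Real InnerProductGeometry

section InnerProductSpace

variable {V : Type*} [NormedAddCommGroup V] [InnerProductSpace ℝ V]

theorem sin_angle_mul_norm_le_norm_sub (u w : V) : sin (angle u w) * ‖u‖ ≤ ‖u - w‖ := by
  rw [sin_angle_mul_norm_eq_sin_angle_mul_norm]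
  exact mul_le_of_le_one_left (norm_nonneg _) (sin_le_one _)

theorem angle_le_pi_div_two_of_norm_sub_le {u w : V} (h : ‖u - w‖ ≤ ‖u‖) : angle u w ≤ π / 2 := by
  have hinner : 0 ≤ inner ℝ u w := by
    nlinarith [norm_sub_sq_real u w, sq_nonneg ‖w‖, pow_le_pow_left₀ (norm_nonneg _) h 2]
  exact arccos_le_pi_div_two.2 (div_nonneg hinner (by positivity))

theorem angle_mul_norm_le_of_norm_sub_le {u w : V} (h : ‖u - w‖ ≤ ‖u‖) :
    angle u w * ‖u‖ ≤ π / 2 * ‖u - w‖ := by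
  have hjordan : 2 / π * angle u w ≤ sin (angle u w) :=
    mul_le_sin (angle_nonneg u w) (angle_le_pi_div_two_of_norm_sub_le h)
  calc angle u w * ‖u‖ = π / 2 * (2 / π * angle u w * ‖u‖) := by field_simp
    _ ≤ π / 2 * (sin (angle u w) * ‖u‖) := by gcongr
    _ ≤ π / 2 * ‖u - w‖ := by gcongr; exact sin_angle_mul_norm_le_norm_sub u w

theorem angle_le_of_norm_sub_le {u w : V} {r ε : ℝ} (hr : 0 < r) (hεr : ε ≤ r)
    (hu : r ≤ ‖u‖) (huw : ‖u - w‖ ≤ ε) : angle u w ≤ π / 2 * (ε / r) := by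
  rw [mul_div_assoc', le_div_iff₀ hr]
  calc angle u w * r ≤ angle u w * ‖u‖ := by gcongr; exact angle_nonneg u w
    _ ≤ π / 2 * ‖u - w‖ := angle_mul_norm_le_of_norm_sub_le (huw.trans (hεr.trans hu))
    _ ≤ π / 2 * ε := by gcongr

theorem abs_angle_sub_angle_le (u v u' v' : V) :
    |angle u v - angle u' v'| ≤ angle u u' + angle v v' := by
  rw [abs_le]
  constructor
  · linarith [angle_le_angle_add_angle u' u v', angle_le_angle_add_angle u v v', angle_comm u u']
  · linarith [angle_le_angle_add_angle u u' v, angle_le_angle_add_angle u' v' v, angle_comm v v']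

theorem abs_angle_sub_angle_le_of_norm_sub_le {u v u' v' : V} {r ε : ℝ} (hr : 0 < r)
    (hεr : ε ≤ r) (hu : r ≤ ‖u‖) (hv : r ≤ ‖v‖) (huu' : ‖u - u'‖ ≤ ε) (hvv' : ‖v - v'‖ ≤ ε) :
    |angle u v - angle u' v'| ≤ π * (ε / r) := by
  linarith [abs_angle_sub_angle_le u v u' v', angle_le_of_norm_sub_le hr hεr hu huu',
    angle_le_of_norm_sub_le hr hεr hv hvv']

end InnerProductSpace

theorem arc_nonneg {d : ℕ} (u v : EuclideanSpace ℝ (Fin d)) : 0 ≤ Arc u v := by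
  unfold Arc
  split_ifs
  · exact mul_nonneg (by positivity) (arccos_nonneg _)
  · exact le_rfl

theorem arc_eq_inv_two_pi_mul_angle {d : ℕ} {u v : EuclideanSpace ℝ (Fin d)} (hu : u ≠ 0)
    (hv : v ≠ 0) :
    Arc u v = (2 * π)⁻¹ * angle u v := by
  simp only [Arc, if_pos (And.intro hu hv), angle]

theorem arc_stability_general {d : ℕ} (δ : ℝ) (hδ0 : 0 < δ)
    (y1 y2 y5 y1' y2' y5' : EuclideanSpace ℝ (Fin d))
    (h1 : ‖y1 - y1'‖ ≤ δ) (h2 : ‖y2 - y2'‖ ≤ δ) (h5 : ‖y5 - y5'‖ ≤ δ)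
    (hleg1 : Real.sqrt δ ≤ ‖y1 - y5‖) (hleg2 : Real.sqrt δ ≤ ‖y2 - y5‖)
    (hang_hi : Arc (y1 - y5) (y2 - y5) ≤ 1 / 2 - (3 / 2) * Real.sqrt δ) :
    |Arc (y1 - y5) (y2 - y5) - Arc (y1' - y5') (y2' - y5')| ≤ (3 / 2) * Real.sqrt δ := by
  have hs0 : 0 < √δ := sqrt_pos.2 hδ0
  have hs : √δ ≤ 1 / 3 := by linarith [arc_nonneg (y1 - y5) (y2 - y5)]
  have h2δ : 2 * δ < √δ := by nlinarith [mul_self_sqrt hδ0.le]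
  have hdisp : ∀ {a b a' b' : EuclideanSpace ℝ (Fin d)}, ‖a - a'‖ ≤ δ → ‖b - b'‖ ≤ δ →
      ‖(a - b) - (a' - b')‖ ≤ 2 * δ := fun ha hb => by
    rw [← dist_eq_norm] at *; linarith [dist_sub_sub_le_of_le ha hb]
  have hne : ∀ {w w' : EuclideanSpace ℝ (Fin d)}, √δ ≤ ‖w‖ → ‖w - w'‖ ≤ 2 * δ →
      w ≠ 0 ∧ w' ≠ 0 := fun {w w'} hw hww' =>
    ⟨norm_pos_iff.1 (hs0.trans_le hw), norm_pos_iff.1 (by linarith [norm_sub_norm_le w w'])⟩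
  obtain ⟨hu, hu'⟩ := hne hleg1 (hdisp h1 h5)
  obtain ⟨hv, hv'⟩ := hne hleg2 (hdisp h2 h5)
  have hangle := abs_angle_sub_angle_le_of_norm_sub_le hs0 h2δ.le hleg1 hleg2
    (hdisp h1 h5) (hdisp h2 h5)
  rw [arc_eq_inv_two_pi_mul_angle hu hv, arc_eq_inv_two_pi_mul_angle hu' hv', ← mul_sub, abs_mul,
    abs_of_pos (by positivity)]
  calc (2 * π)⁻¹ * |angle (y1 - y5) (y2 - y5) - angle (y1' - y5') (y2' - y5')|
      ≤ (2 * π)⁻¹ * (π * (2 * δ / √δ)) := by gcongr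
    _ = δ / √δ := by field_simp
    _ = √δ := div_sqrt
    _ ≤ 3 / 2 * √δ := by linarith

/-- stability of the normalized angle.  If the three points move by at
most `δ ≤ 1/4`, the two legs have length at least `√δ`, and the original angle is in
`[(3/2)√δ, 1/2 − (3/2)√δ]`, then the angle changes by at most `(3/2)√δ`. -/
theorem arc_stability {d : ℕ} (δ : ℝ) (hδ0 : 0 < δ) (hδ : δ ≤ 1 / 4)
    (y1 y2 y5 y1' y2' y5' : EuclideanSpace ℝ (Fin d))
    (h1 : ‖y1 - y1'‖ ≤ δ) (h2 : ‖y2 - y2'‖ ≤ δ) (h5 : ‖y5 - y5'‖ ≤ δ)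
    (hleg1 : Real.sqrt δ ≤ ‖y1 - y5‖) (hleg2 : Real.sqrt δ ≤ ‖y2 - y5‖)
    (hang_lo : (3 / 2) * Real.sqrt δ ≤ Arc (y1 - y5) (y2 - y5))
    (hang_hi : Arc (y1 - y5) (y2 - y5) ≤ 1 / 2 - (3 / 2) * Real.sqrt δ) :
    |Arc (y1 - y5) (y2 - y5) - Arc (y1' - y5') (y2' - y5')| ≤ (3 / 2) * Real.sqrt δ :=
  arc_stability_general δ hδ0 y1 y2 y5 y1' y2' y5' h1 h2 h5 hleg1 hleg2 hang_hi
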